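/- Let H = H₁ + H₂ where H₁ and H₂ are self-adjoint operators on a finite-dimensional complex inner product space ℋ = S ⊕ S^⊥ (S a nonzero subspace), H₁ vanishes on S, ⟨x, H₁ x⟩ ≥ J‖x‖² for every x ∈ S^⊥, K := ‖H₂‖, and J > 2K. Then for any δ ≥ 0 and any unit vector ψ with ⟨ψ, H ψ⟩ ≤ λmin(H) + δ, there exists a unit vector ψ' ∈ S such that both |⟨ψ, ψ'⟩|² ≥ 1 − ((K + √(K² + δ(J − 2K))) / (J − 2K))² and ⟨ψ', H ψ'⟩ ≤ λmin(H) + δ + 2K · (K + √(K² + δ(J − 2K))) / (J − 2K). -/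

import Mathlib

open scoped ComplexInnerProductSpace

/-!
Split `ψ = p + q` with `p ∈ S`, `q ∈ Sᗮ`, and take `ψ' = p / ‖p‖` (any unit vector of `S` if
`p = 0`). Since `H₁` only sees `q`, the energy of `ψ` is at least
`J‖q‖² + ‖p‖² t - 2K‖p‖‖q‖ - K‖q‖²`, where `t = ⟪ψ', H ψ'⟫` satisfies `λmin(H) ≤ t ≤ K`.
Comparing with `λmin(H) + δ` gives the quadratic inequality `(J - 2K)‖q‖² - 2K‖q‖ ≤ δ`, so `‖q‖`
is at most its larger root `ε`. Hence `|⟪ψ, ψ'⟫|² = ‖p‖² = 1 - ‖q‖² ≥ 1 - ε²`, and the same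
comparison bounds `t` by `λmin(H) + δ + 2K‖q‖`.
-/

/-- The smallest eigenvalue of a self-adjoint operator on a finite-dimensional complex
inner product space, expressed as the infimum of the Rayleigh quotient over unit vectors. -/
noncomputable def lamMin {ℋ : Type*} [NormedAddCommGroup ℋ] [InnerProductSpace ℂ ℋ]
    (A : ℋ →L[ℂ] ℋ) : ℝ :=
  sInf {r : ℝ | ∃ x : ℋ, ‖x‖ = 1 ∧ r = (⟪x, A x⟫).re}

-- `a`, `b`: norms of the components of `ψ` in `Sᗮ` and `S`; `t`: energy of the normalised
-- `S`-component; `m`: the ground energy.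
theorem quadratic_le_and_le_of_energy_le {J K m δ t a b : ℝ} (hK : 0 ≤ K) (hJK : 2 * K ≤ J)
    (ha : 0 ≤ a) (hb : 0 ≤ b) (hab : a ^ 2 + b ^ 2 = 1) (hmt : m ≤ t) (htK : t ≤ K)
    (hE : J * a ^ 2 + b ^ 2 * t - 2 * K * b * a - K * a ^ 2 ≤ m + δ) :
    (J - 2 * K) * a ^ 2 - 2 * K * a ≤ δ ∧ t ≤ m + δ + 2 * K * a := by
  have hb1 : b ≤ 1 := by nlinarith
  have hKba : K * b * a ≤ K * a := by
    have := mul_le_mul_of_nonneg_left hb1 (mul_nonneg hK ha)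
    linarith
  have htK' : t * a ^ 2 ≤ K * a ^ 2 := mul_le_mul_of_nonneg_right htK (sq_nonneg a)
  have hgap : 0 ≤ (J - 2 * K) * a ^ 2 := mul_nonneg (by linarith) (sq_nonneg a)
  constructor <;> nlinarith

theorem le_add_sqrt_div_of_quadratic_le {c k δ u : ℝ} (hc : 0 < c)
    (h : c * u ^ 2 - 2 * k * u ≤ δ) : u ≤ (k + √(k ^ 2 + δ * c)) / c := by
  have hsq : (c * u - k) ^ 2 ≤ k ^ 2 + δ * c := by nlinarith
  rw [le_div_iff₀ hc]
  linarith [le_abs_self (c * u - k), Real.abs_le_sqrt hsq]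

section

variable {ℋ : Type*} [NormedAddCommGroup ℋ] [InnerProductSpace ℂ ℋ]

theorem abs_re_inner_apply_le (A : ℋ →L[ℂ] ℋ) (x y : ℋ) :
    |(⟪x, A y⟫).re| ≤ ‖A‖ * (‖x‖ * ‖y‖) :=
  calc |(⟪x, A y⟫).re| ≤ ‖x‖ * ‖A y‖ :=
        (Complex.abs_re_le_norm _).trans (norm_inner_le_norm _ _)
    _ ≤ ‖x‖ * (‖A‖ * ‖y‖) := by gcongr; exact A.le_opNorm y
    _ = ‖A‖ * (‖x‖ * ‖y‖) := by ring

theorem lamMin_le_re_inner_apply_self (A : ℋ →L[ℂ] ℋ) {x : ℋ} (hx : ‖x‖ = 1) :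
    lamMin A ≤ (⟪x, A x⟫).re := by
  refine csInf_le ⟨-‖A‖, ?_⟩ ⟨x, hx, rfl⟩
  rintro r ⟨y, hy, rfl⟩
  have := abs_re_inner_apply_le A y y
  rw [hy] at this
  linarith [neg_abs_le (⟪y, A y⟫).re]

theorem re_inner_ofReal_smul_apply_ofReal_smul (A : ℋ →L[ℂ] ℋ) (r : ℝ) (x : ℋ) :
    (⟪(r : ℂ) • x, A ((r : ℂ) • x)⟫).re = r ^ 2 * (⟪x, A x⟫).re := by
  rw [map_smul, inner_smul_left, inner_smul_right, Complex.conj_ofReal, ← mul_assoc,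
    ← Complex.ofReal_mul, Complex.re_ofReal_mul, sq]

theorem re_inner_add_apply_add_ge (A : ℋ →L[ℂ] ℋ) (p q : ℋ) :
    (⟪p, A p⟫).re - 2 * ‖A‖ * ‖p‖ * ‖q‖ - ‖A‖ * ‖q‖ ^ 2 ≤ (⟪p + q, A (p + q)⟫).re := by
  have hexp : (⟪p + q, A (p + q)⟫).re =
      (⟪p, A p⟫).re + (⟪p, A q⟫).re + (⟪q, A p⟫).re + (⟪q, A q⟫).re := by
    simp only [map_add, inner_add_left, inner_add_right, Complex.add_re]
    ring
  have hpq := abs_le.mp (abs_re_inner_apply_le A p q)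
  have hqp := abs_le.mp (abs_re_inner_apply_le A q p)
  have hqq := abs_le.mp (abs_re_inner_apply_le A q q)
  nlinarith [hpq.1, hqp.1, hqq.1]

namespace Submodule

variable (S : Submodule ℂ ℋ)

theorem exists_norm_eq_one_and_eq_norm_smul (hS : S ≠ ⊥) {p : ℋ} (hp : p ∈ S) :
    ∃ u ∈ S, ‖u‖ = 1 ∧ p = (‖p‖ : ℂ) • u := by
  by_cases hp0 : p = 0
  · obtain ⟨x, hxS, hx0⟩ := exists_mem_ne_zero_of_ne_bot hS
    refine ⟨(‖x‖⁻¹ : ℂ) • x, S.smul_mem _ hxS, ?_, by simp [hp0]⟩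
    rw [norm_smul, norm_inv, Complex.norm_real, norm_norm,
      inv_mul_cancel₀ (norm_ne_zero_iff.mpr hx0)]
  · have hp0' : (‖p‖ : ℂ) ≠ 0 := by exact_mod_cast norm_ne_zero_iff.mpr hp0
    refine ⟨(‖p‖⁻¹ : ℂ) • p, S.smul_mem _ hp, ?_,
      by rw [smul_smul, mul_inv_cancel₀ hp0', one_smul]⟩
    rw [norm_smul, norm_inv, Complex.norm_real, norm_norm,
      inv_mul_cancel₀ (norm_ne_zero_iff.mpr hp0)]

theorem inner_add_apply_add_eq_of_forall_mem_apply_eq_zero {A : ℋ →L[ℂ] ℋ}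
    (hA : (A : ℋ →ₗ[ℂ] ℋ).IsSymmetric) (hS : ∀ x ∈ S, A x = 0) {p : ℋ} (hp : p ∈ S) (q : ℋ) :
    ⟪p + q, A (p + q)⟫ = ⟪q, A q⟫ := by
  have hpq : ⟪p, A q⟫ = 0 := by simpa [hS p hp] using (hA p q).symm
  rw [map_add, hS p hp, zero_add, inner_add_left, hpq, zero_add]

theorem re_inner_add_apply_add_ge_of_gap {H₁ : ℋ →L[ℂ] ℋ} (hH₁ : (H₁ : ℋ →ₗ[ℂ] ℋ).IsSymmetric)
    (hvanish : ∀ x ∈ S, H₁ x = 0) {J : ℝ} (hgap : ∀ x ∈ Sᗮ, J * ‖x‖ ^ 2 ≤ (⟪x, H₁ x⟫).re)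
    (H₂ : ℋ →L[ℂ] ℋ) {p q : ℋ} (hp : p ∈ S) (hq : q ∈ Sᗮ) :
    J * ‖q‖ ^ 2 + (⟪p, H₂ p⟫).re - 2 * ‖H₂‖ * ‖p‖ * ‖q‖ - ‖H₂‖ * ‖q‖ ^ 2 ≤
      (⟪p + q, (H₁ + H₂) (p + q)⟫).re := by
  rw [add_apply, inner_add_right, Complex.add_re,
    S.inner_add_apply_add_eq_of_forall_mem_apply_eq_zero hH₁ hvanish hp]
  linarith [hgap q hq, re_inner_add_apply_add_ge H₂ p q]

end Submodule

end

theorem extended_projection_lemma_full_general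
    {ℋ : Type*} [NormedAddCommGroup ℋ] [InnerProductSpace ℂ ℋ] [FiniteDimensional ℂ ℋ]
    (H₁ H₂ : ℋ →L[ℂ] ℋ) (hH₁ : IsSelfAdjoint H₁)
    (S : Submodule ℂ ℋ) (hS : S ≠ ⊥)
    (hvanish : ∀ x ∈ S, H₁ x = 0)
    (J : ℝ) (hgap : ∀ x ∈ Sᗮ, J * ‖x‖ ^ 2 ≤ (⟪x, H₁ x⟫).re)
    (K : ℝ) (hK : K = ‖H₂‖) (hJK : 2 * K < J)
    (δ : ℝ)
    (ψ : ℋ) (hψ : ‖ψ‖ = 1)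
    (hlow : (⟪ψ, (H₁ + H₂) ψ⟫).re ≤ lamMin (H₁ + H₂) + δ) :
    ∃ ψ' ∈ S, ‖ψ'‖ = 1 ∧
      1 - ((K + Real.sqrt (K ^ 2 + δ * (J - 2 * K))) / (J - 2 * K)) ^ 2 ≤ ‖⟪ψ, ψ'⟫‖ ^ 2 ∧
      (⟪ψ', (H₁ + H₂) ψ'⟫).re ≤
        lamMin (H₁ + H₂) + δ + 2 * K * (K + Real.sqrt (K ^ 2 + δ * (J - 2 * K))) / (J - 2 * K) := by
  set p := S.starProjection ψ
  set q := Sᗮ.starProjection ψ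
  have hpS : p ∈ S := S.starProjection_apply_mem ψ
  have hqS : q ∈ Sᗮ := Sᗮ.starProjection_apply_mem ψ
  have hψpq : ψ = p + q := (S.starProjection_add_starProjection_orthogonal ψ).symm
  have hK0 : 0 ≤ K := hK ▸ norm_nonneg H₂
  obtain ⟨u, huS, hu1, hpu⟩ := S.exists_norm_eq_one_and_eq_norm_smul hS hpS
  set t := (⟪u, (H₁ + H₂) u⟫).re
  have hHu : t = (⟪u, H₂ u⟫).re := by simp [t, hvanish u huS]
  have htK : t ≤ K := by
    simpa [hHu, hK, hu1] using (le_abs_self _).trans (abs_re_inner_apply_le H₂ u u)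
  have hnorm : ‖q‖ ^ 2 + ‖p‖ ^ 2 = 1 := by
    rw [add_comm, ← Submodule.norm_sq_eq_add_norm_sq_starProjection ψ S, hψ, one_pow]
  have hoverlap : ⟪ψ, u⟫ = ‖p‖ := by
    rw [hψpq, inner_add_left, Submodule.inner_left_of_mem_orthogonal huS hqS, add_zero,
      hpu, inner_smul_left, inner_self_eq_norm_sq_to_K]
    simp [norm_smul, hu1]
  have hE : J * ‖q‖ ^ 2 + ‖p‖ ^ 2 * t - 2 * K * ‖p‖ * ‖q‖ - K * ‖q‖ ^ 2 ≤
      lamMin (H₁ + H₂) + δ := by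
    have hpp : (⟪p, H₂ p⟫).re = ‖p‖ ^ 2 * t := by
      rw [hHu, ← re_inner_ofReal_smul_apply_ofReal_smul, ← hpu]
    have := S.re_inner_add_apply_add_ge_of_gap hH₁.isSymmetric hvanish hgap H₂ hpS hqS
    rw [← hψpq, ← hK, hpp] at this
    linarith
  obtain ⟨hquad, hen⟩ := quadratic_le_and_le_of_energy_le hK0 hJK.le (norm_nonneg q)
    (norm_nonneg p) hnorm (lamMin_le_re_inner_apply_self _ hu1) htK hE
  have hqε := le_add_sqrt_div_of_quadratic_le (by linarith) hquad
  refine ⟨u, huS, hu1, ?_, ?_⟩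
  · rw [hoverlap, Complex.norm_real, norm_norm]
    nlinarith [pow_le_pow_left₀ (norm_nonneg q) hqε 2]
  · rw [mul_div_assoc]
    nlinarith

/-- Extended Projection Lemma, deviation bound together with the energy obtained by the
perturbed state against `H = H₁ + H₂`. -/
theorem extended_projection_lemma_full
    {ℋ : Type*} [NormedAddCommGroup ℋ] [InnerProductSpace ℂ ℋ] [FiniteDimensional ℂ ℋ]
    (H₁ H₂ : ℋ →L[ℂ] ℋ) (hH₁ : IsSelfAdjoint H₁) (hH₂ : IsSelfAdjoint H₂)
    (S : Submodule ℂ ℋ) (hS : S ≠ ⊥)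
    (hvanish : ∀ x ∈ S, H₁ x = 0)
    (J : ℝ) (hgap : ∀ x ∈ Sᗮ, J * ‖x‖ ^ 2 ≤ (⟪x, H₁ x⟫).re)
    (K : ℝ) (hK : K = ‖H₂‖) (hJK : 2 * K < J)
    (δ : ℝ) (hδ : 0 ≤ δ)
    (ψ : ℋ) (hψ : ‖ψ‖ = 1)
    (hlow : (⟪ψ, (H₁ + H₂) ψ⟫).re ≤ lamMin (H₁ + H₂) + δ) :
    ∃ ψ' ∈ S, ‖ψ'‖ = 1 ∧
      1 - ((K + Real.sqrt (K ^ 2 + δ * (J - 2 * K))) / (J - 2 * K)) ^ 2 ≤ ‖⟪ψ, ψ'⟫‖ ^ 2 ∧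
      (⟪ψ', (H₁ + H₂) ψ'⟫).re ≤
        lamMin (H₁ + H₂) + δ + 2 * K * (K + Real.sqrt (K ^ 2 + δ * (J - 2 * K))) / (J - 2 * K) :=
  extended_projection_lemma_full_general H₁ H₂ hH₁ S hS hvanish J hgap K hK hJK δ ψ hψ hlow
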